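/- Let n1,n2,α0,α1,α2 ∈ ℂ with n1·n2 = 4 and δ := 4α0 + 2n1α1 − (n1+2)α2 ≠ 0. Let U ⊆ ℂ be open with 0 ∉ U, and let x, y : ℂ → ℂ be differentiable on U with x(t) ≠ 0 for t ∈ U, satisfying the generalized Painlevé III system with parameters (n1,n2; α0,α1,α2) on U. Then the functions x̃(t) := t/x(t) and ỹ(t) := −x(t)·(x(t)·y(t)+α2)/t satisfy the generalized Painlevé III system on U with parameters (n2,n1; α1,α0,α2), provided the quantity δ formed from these new parameters is nonzero. -/

import Mathlib

/-! The new constant is a multiple of the old one, `n1 * δ̃ = 2 * δ` (this uses `n1 * n2 = 4`).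
Hence, after the quotient rule and clearing denominators, each equation of the transformed
system multiplied by `n1` is a linear combination of the original two equations and of
`n1 * n2 - 4`, with coefficients polynomial in `t`, `x`, `y`, `x'`, `y'`. -/

/-- The constant `δ` of the generalized Painlevé III system. -/
noncomputable def piiiDelta (n1 b0 b1 b2 : ℂ) : ℂ :=
  4 * b0 + 2 * n1 * b1 - (n1 + 2) * b2

/-- `x, y : ℂ → ℂ` are differentiable on `U` and satisfy the generalized
Painlevé III system with parameters `(n1,n2; b0,b1,b2)` on `U`. -/
def PIIISystem (n1 n2 b0 b1 b2 : ℂ) (U : Set ℂ) (x y : ℂ → ℂ) : Prop :=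
  DifferentiableOn ℂ x U ∧ DifferentiableOn ℂ y U ∧
  ∀ t ∈ U,
    (piiiDelta n1 b0 b1 b2 * t * deriv x t =
      -(n1 + 2) * (x t) ^ 2 * y t + 2 * (x t) ^ 2 + 2 * (n1 * b1 - 2 * b2) * x t - n1 * t)
    ∧
    (piiiDelta n1 b0 b1 b2 * t * deriv y t =
      4 * x t * (y t) ^ 2 - 4 * x t * y t - (2 * n1 * b1 + (n1 - 6) * b2) * y t - 2 * b2)

section
variable {n1 n2 a0 a1 a2 t X Y dX dY : ℂ}

theorem mul_piiiDelta_swap (hrel : n1 * n2 = 4) :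
    n1 * piiiDelta n2 a1 a0 a2 = 2 * piiiDelta n1 a0 a1 a2 := by
  unfold piiiDelta; linear_combination (2 * a0 - a2) * hrel

theorem piii_pi_first_equation (hrel : n1 * n2 = 4) (ht : t ≠ 0) (hX : X ≠ 0)
    (h1 : piiiDelta n1 a0 a1 a2 * t * dX =
      -(n1 + 2) * X ^ 2 * Y + 2 * X ^ 2 + 2 * (n1 * a1 - 2 * a2) * X - n1 * t) :
    piiiDelta n2 a1 a0 a2 * t * ((X - t * dX) / X ^ 2) =
      -(n2 + 2) * (t / X) ^ 2 * (-(X * (X * Y + a2)) / t) + 2 * (t / X) ^ 2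
        + 2 * (n2 * a0 - 2 * a2) * (t / X) - n2 * t := by
  have hn1 : n1 ≠ 0 := left_ne_zero_of_mul (by rw [hrel]; norm_num)
  refine mul_left_cancel₀ hn1 ?_
  rw [← mul_assoc, ← mul_assoc, mul_piiiDelta_swap hrel]
  unfold piiiDelta at h1 ⊢
  field_simp
  linear_combination (-2) * h1 + (-2 * a2 * X - X ^ 2 * Y + X ^ 2 + X * (a2 - 2 * a0)) * hrel

theorem piii_pi_second_equation (hrel : n1 * n2 = 4) (ht : t ≠ 0) (hX : X ≠ 0)
    (h1 : piiiDelta n1 a0 a1 a2 * t * dX =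
      -(n1 + 2) * X ^ 2 * Y + 2 * X ^ 2 + 2 * (n1 * a1 - 2 * a2) * X - n1 * t)
    (h2 : piiiDelta n1 a0 a1 a2 * t * dY =
      4 * X * Y ^ 2 - 4 * X * Y - (2 * n1 * a1 + (n1 - 6) * a2) * Y - 2 * a2) :
    piiiDelta n2 a1 a0 a2 * t *
        ((-(dX * (X * Y + a2) + X * (dX * Y + X * dY)) * t + X * (X * Y + a2)) / t ^ 2) =
      4 * (t / X) * (-(X * (X * Y + a2)) / t) ^ 2 - 4 * (t / X) * (-(X * (X * Y + a2)) / t)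
        - (2 * n2 * a0 + (n2 - 6) * a2) * (-(X * (X * Y + a2)) / t) - 2 * a2 := by
  have hn1 : n1 ≠ 0 := left_ne_zero_of_mul (by rw [hrel]; norm_num)
  refine mul_left_cancel₀ hn1 ?_
  rw [← mul_assoc, ← mul_assoc, mul_piiiDelta_swap hrel]
  unfold piiiDelta at h1 h2 ⊢
  field_simp
  linear_combination (-2 * (a2 + 2 * X * Y)) * h1 + (-2 * X ^ 2) * h2 +
    (- (X * Y + a2) * (2 * a0 + a2) * X) * hrel
end

theorem hasDerivAt_id_div {x : ℂ → ℂ} {dX t : ℂ} (hx : HasDerivAt x dX t) (hX : x t ≠ 0) :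
    HasDerivAt (fun s => s / x s) ((x t - t * dX) / x t ^ 2) t :=
  ((hasDerivAt_id' t).div hx hX).congr_deriv (by ring)

theorem hasDerivAt_piii_pi_snd {x y : ℂ → ℂ} {dX dY t : ℂ} (a2 : ℂ) (hx : HasDerivAt x dX t)
    (hy : HasDerivAt y dY t) (ht : t ≠ 0) :
    HasDerivAt (fun s => -(x s * (x s * y s + a2)) / s)
      ((-(dX * (x t * y t + a2) + x t * (dX * y t + x t * dY)) * t
        + x t * (x t * y t + a2)) / t ^ 2) t :=
  (((hx.mul ((hx.mul hy).add_const a2)).neg).div (hasDerivAt_id' t) ht).congr_deriv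
    (by simp only [Pi.neg_apply, Pi.mul_apply]; ring)

theorem piii_symmetry_pi_general (n1 n2 a0 a1 a2 : ℂ)
    (hrel : n1 * n2 = 4)
    (U : Set ℂ) (hU : IsOpen U) (h0U : (0 : ℂ) ∉ U)
    (x y : ℂ → ℂ) (hx : ∀ t ∈ U, x t ≠ 0)
    (hxy : PIIISystem n1 n2 a0 a1 a2 U x y) :
    PIIISystem n2 n1 a1 a0 a2 U
      (fun t => t / x t) (fun t => -(x t * (x t * y t + a2)) / t) := by
  obtain ⟨hxd, hyd, hsys⟩ := hxy
  have hU0 : ∀ t ∈ U, t ≠ 0 := fun t ht h => h0U (h ▸ ht)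
  refine ⟨differentiableOn_id.div hxd hx,
    ((hxd.mul ((hxd.mul hyd).add_const a2)).neg).div differentiableOn_id hU0, fun t ht => ?_⟩
  obtain ⟨h1, h2⟩ := hsys t ht
  have hdx := (hxd.differentiableAt (hU.mem_nhds ht)).hasDerivAt
  have hdy := (hyd.differentiableAt (hU.mem_nhds ht)).hasDerivAt
  have hdx' := hasDerivAt_id_div hdx (hx t ht)
  have hdy' := hasDerivAt_piii_pi_snd a2 hdx hdy (hU0 t ht)
  rw [hdx'.deriv, hdy'.deriv]
  exact ⟨piii_pi_first_equation hrel (hU0 t ht) (hx t ht) h1,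
    piii_pi_second_equation hrel (hU0 t ht) (hx t ht) h1 h2⟩

/-- Birational symmetry `π` of the generalized Painlevé III system:
`x̃(t) = t/x(t)`, `ỹ(t) = −x(t)·(x(t)·y(t)+α2)/t`, with parameters `(n2,n1; α1,α0,α2)`. -/
theorem piii_symmetry_pi (n1 n2 a0 a1 a2 : ℂ)
    (hrel : n1 * n2 = 4)
    (hδ : piiiDelta n1 a0 a1 a2 ≠ 0)
    (U : Set ℂ) (hU : IsOpen U) (h0U : (0 : ℂ) ∉ U)
    (x y : ℂ → ℂ) (hx : ∀ t ∈ U, x t ≠ 0)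
    (hxy : PIIISystem n1 n2 a0 a1 a2 U x y)
    (hδ' : piiiDelta n2 a1 a0 a2 ≠ 0) :
    PIIISystem n2 n1 a1 a0 a2 U
      (fun t => t / x t) (fun t => -(x t * (x t * y t + a2)) / t) :=
  piii_symmetry_pi_general n1 n2 a0 a1 a2 hrel U hU h0U x y hx hxy
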